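/- arXiv:2601.04425 — 2 statements merged into one kernel-verified Lean document; each statement's English description precedes it below -/
import Mathlib

section
/- Let m be a positive integer and let a, b, c be real numbers such that none of a, b, c, a−c, b−c, a+b−c is an integer. Then Σ_{k=0}^{m} [(−m)_k (a)_k (b)_k] / [(c)_k (a+b−m−c+2)_k · k!] = [Γ(a+b−m−c+2)·Γ(m−1−b+c)·Γ(1−c+a)·Γ(c)] / [Γ(2−m−c+a)·Γ(b−c+a+2)·Γ(m+c)·Γ(c−b)] · (−c² + (−m+b+a+2)·c − (1−m+b)·a + (m−1)·(b+1)). -/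
/-!
Lowering `m` by one, `(-m-1)_k - (-m)_k = -k (-m)_(k-1)` gives the contiguous relation
`F(-m-1, a, b; c, f) = F(-m, a, b; c, f) - ab/(cf) F(-m, a+1, b+1; c+1, f+1)`
for terminating `₃F₂(…; 1)` series. With `f = a + b - c + 1 - m` it writes the 2-balanced series
as a combination of two 1-balanced ones, which the Pfaff–Saalschütz formula evaluates; together
with the relation in the lower parameter, `1/(e)_k = (1 + k/e)/(e+1)_k`, it also drives Pfaff's
induction on `m` proving that formula. Finally `Γ(x + n) = (x)_n Γ(x)` turns the Gamma quotient
into Pochhammer symbols.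
-/

open scoped BigOperators
open Finset

/-- Pochhammer (ascending factorial) `(x)_k = x (x+1) ⋯ (x+k-1)`. -/
noncomputable def poch (x : ℝ) (k : ℕ) : ℝ := Polynomial.eval x (ascPochhammer ℝ k)

@[simp] lemma poch_zero (x : ℝ) : poch x 0 = 1 := by simp [poch]

lemma poch_succ (x : ℝ) (n : ℕ) : poch x (n + 1) = poch x n * (x + n) :=
  ascPochhammer_succ_eval n x

lemma poch_add (x : ℝ) (m n : ℕ) : poch x (m + n) = poch x m * poch (x + m) n := by
  simp [poch, ← ascPochhammer_mul, Polynomial.eval_comp]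

lemma poch_succ' (x : ℝ) (n : ℕ) : poch x (n + 1) = x * poch (x + 1) n := by
  rw [add_comm, poch_add]; simp [poch]

lemma poch_mul_add (x : ℝ) (n : ℕ) : poch x n * (x + n) = x * poch (x + 1) n := by
  rw [← poch_succ, poch_succ']

lemma poch_ne_zero {x : ℝ} (hx : ∀ k : ℕ, x ≠ -k) (n : ℕ) : poch x n ≠ 0 := by
  simp only [poch, ne_eq, ascPochhammer_eval_eq_zero_iff, not_exists, not_and]
  intro k _ h
  exact hx k (by rw [h, neg_neg])

lemma poch_one_sub_sub (x : ℝ) (n : ℕ) : poch (1 - n - x) n = (-1) ^ n * poch x n := by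
  rw [show 1 - (n : ℝ) - x = -(x + n - 1) by ring, poch, ascPochhammer_eval_neg_eq_descPochhammer,
    descPochhammer_eval_eq_ascPochhammer, poch]
  ring_nf

lemma Gamma_add_nat {x : ℝ} (hx : ∀ k : ℕ, x ≠ -k) (n : ℕ) :
    Real.Gamma (x + n) = poch x n * Real.Gamma x := by
  induction n with
  | zero => simp
  | succ n ih =>
    have hxn : x + n ≠ 0 := fun h => hx n (by linarith)
    rw [Nat.cast_succ, ← add_assoc, Real.Gamma_add_one hxn, ih, poch_succ]
    ring

noncomputable def term3F2 (x a b c f : ℝ) (k : ℕ) : ℝ :=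
  poch x k * poch a k * poch b k / (poch c k * poch f k * (k.factorial : ℝ))

lemma term3F2_succ (x a b c f : ℝ) (j : ℕ) :
    term3F2 x a b c f (j + 1) =
      x * a * b / (c * f * (j + 1)) * term3F2 (x + 1) (a + 1) (b + 1) (c + 1) (f + 1) j := by
  simp only [term3F2, poch_succ', Nat.factorial_succ, Nat.cast_mul, Nat.cast_succ, div_eq_mul_inv,
    mul_inv]
  ring

lemma term3F2_upper_add_one {x a b c f : ℝ} {k : ℕ} (hx : x ≠ 0) :
    term3F2 (x + 1) a b c f k = (x + k) / x * term3F2 x a b c f k := by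
  have h : poch (x + 1) k = poch x k * (x + k) / x :=
    eq_div_of_mul_eq hx (by rw [mul_comm, poch_mul_add])
  simp only [term3F2, h, div_eq_mul_inv, mul_inv]
  ring

lemma term3F2_eq_mul_lower_add_one {x a b c f : ℝ} {k : ℕ} (hf : f + k ≠ 0) :
    term3F2 x a b c f k = (f + k) / f * term3F2 x a b c (f + 1) k := by
  simp only [term3F2, eq_div_of_mul_eq hf (poch_mul_add f k), div_eq_mul_inv, mul_inv,
    inv_inv]
  ring

lemma add_nat_ne_zero_of_poch_ne_zero {x : ℝ} {n k : ℕ} (hx : poch x n ≠ 0) (hk : k < n) :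
    x + k ≠ 0 := by
  contrapose! hx
  simp only [poch, ascPochhammer_eval_eq_zero_iff]
  exact ⟨k, hk, by linarith⟩

lemma sum_range_mul_term3F2 (x a b c f : ℝ) (n : ℕ) :
    ∑ k ∈ range (n + 1), (k : ℝ) * term3F2 x a b c f k =
      x * a * b / (c * f) *
        ∑ j ∈ range n, term3F2 (x + 1) (a + 1) (b + 1) (c + 1) (f + 1) j := by
  rw [sum_range_succ', mul_sum]
  simp only [Nat.cast_zero, zero_mul, add_zero, Nat.cast_succ, term3F2_succ]
  refine sum_congr rfl fun j _ => ?_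
  have hj : (j : ℝ) + 1 ≠ 0 := by positivity
  field_simp

noncomputable def terminating3F2 (m : ℕ) (a b c f : ℝ) : ℝ :=
  ∑ k ∈ range (m + 1), term3F2 (-(m : ℝ)) a b c f k

lemma terminating3F2_succ (m : ℕ) (a b c f : ℝ) :
    terminating3F2 (m + 1) a b c f =
      terminating3F2 m a b c f -
        a * b / (c * f) * terminating3F2 m (a + 1) (b + 1) (c + 1) (f + 1) := by
  set x : ℝ := -((m + 1 : ℕ) : ℝ) with hx_def
  have hx : x ≠ 0 := by rw [hx_def]; push_cast; linarith
  have hx1 : -(m : ℝ) = x + 1 := by rw [hx_def]; push_cast; ring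
  have hlast : term3F2 (x + 1) a b c f (m + 1) = 0 := by
    rw [term3F2_upper_add_one hx, hx_def]; push_cast; ring
  have hext : terminating3F2 m a b c f = ∑ k ∈ range (m + 2), term3F2 (x + 1) a b c f k := by
    rw [terminating3F2, hx1, sum_range_succ _ (m + 1), hlast, add_zero]
  have hsplit : ∀ k, term3F2 (x + 1) a b c f k =
      term3F2 x a b c f k + x⁻¹ * (k * term3F2 x a b c f k) := by
    intro k
    rw [term3F2_upper_add_one hx]
    field_simp
  rw [hext, terminating3F2, terminating3F2, hx1]
  simp only [hsplit, sum_add_distrib, ← mul_sum, sum_range_mul_term3F2]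
  field_simp
  ring

lemma terminating3F2_succ_eq_lower_add_one (m : ℕ) (a b c : ℝ) {e : ℝ}
    (he : poch e (m + 2) ≠ 0) :
    terminating3F2 (m + 1) a b c e =
      terminating3F2 (m + 1) a b c (e + 1) -
        (m + 1) * a * b / (e * c * (e + 1)) * terminating3F2 m (a + 1) (b + 1) (c + 1) (e + 2) := by
  have he0 : e ≠ 0 := by simpa using add_nat_ne_zero_of_poch_ne_zero (k := 0) he (by omega)
  have hsplit : ∀ k ∈ range (m + 2), term3F2 (-((m + 1 : ℕ) : ℝ)) a b c e k =
      term3F2 (-((m + 1 : ℕ) : ℝ)) a b c (e + 1) k +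
        e⁻¹ * (k * term3F2 (-((m + 1 : ℕ) : ℝ)) a b c (e + 1) k) := by
    intro k hk
    rw [term3F2_eq_mul_lower_add_one (add_nat_ne_zero_of_poch_ne_zero he (mem_range.1 hk))]
    field_simp
  rw [terminating3F2, terminating3F2, terminating3F2, sum_congr rfl hsplit, sum_add_distrib,
    ← mul_sum, sum_range_mul_term3F2,
    show -((m + 1 : ℕ) : ℝ) + 1 = -(m : ℝ) by push_cast; ring,
    show e + 1 + 1 = e + 2 by ring]
  field_simp
  push_cast
  ring

theorem terminating3F2_saalschutz (m : ℕ) {a b c : ℝ} (hc : ∀ k : ℕ, c ≠ -k)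
    (hs : ∀ z : ℤ, a + b - c ≠ z) :
    terminating3F2 m a b c (a + b - c + 1 - m) =
      poch (c - a) m * poch (c - b) m / (poch c m * poch (c - a - b) m) := by
  induction m generalizing a b c with
  | zero => simp [terminating3F2, term3F2]
  | succ m ih =>
    have hc1 : ∀ k : ℕ, c + 1 ≠ -k := fun k h => hc (k + 1) (by push_cast; linarith)
    have hs1 : ∀ z : ℤ, a + 1 + (b + 1) - (c + 1) ≠ z := fun z h =>
      hs (z - 1) (by push_cast; linarith)
    have he : poch (a + b - c - m) (m + 2) ≠ 0 :=
      poch_ne_zero (fun k h => hs (m - k) (by push_cast; linarith)) _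
    rw [show a + b - c + 1 - ((m + 1 : ℕ) : ℝ) = a + b - c - m by push_cast; ring,
      terminating3F2_succ_eq_lower_add_one m a b c he, terminating3F2_succ,
      show a + b - c - m + 1 = a + b - c + 1 - m by ring, ih hc hs,
      show a + b - c + 1 - m + 1 = a + 1 + (b + 1) - (c + 1) + 1 - m by ring,
      show a + b - c - m + 2 = a + 1 + (b + 1) - (c + 1) + 1 - m by ring, ih hc1 hs1,
      show c + 1 - (a + 1) - (b + 1) = c - a - b - 1 by ring,
      show c + 1 - (a + 1) = c - a by ring, show c + 1 - (b + 1) = c - b by ring]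
    have hcm : c + m ≠ 0 := fun h => hc m (by linarith)
    have hu1 : c - a - b - 1 ≠ 0 := fun h => hs (-1) (by push_cast; linarith)
    have hum : c - a - b + m ≠ 0 := fun h => hs m (by push_cast; linarith)
    have hum1 : c - a - b - 1 + m ≠ 0 := fun h => hs (m - 1) (by push_cast; linarith)
    have he0 : a + b - c - m ≠ 0 := fun h => hs m (by push_cast; linarith)
    have he1 : a + b - c + 1 - m ≠ 0 := fun h => hs (m - 1) (by push_cast; linarith)
    have hcm' : poch c m = c * poch (c + 1) m / (c + m) := eq_div_of_mul_eq hcm (poch_mul_add c m)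
    have hum1' :
        poch (c - a - b - 1) m = (c - a - b - 1) * poch (c - a - b) m / (c - a - b - 1 + m) :=
      eq_div_of_mul_eq hum1 (by rw [poch_mul_add, sub_add_cancel])
    rw [poch_succ (c - a), poch_succ (c - b), poch_succ (c - a - b), poch_succ' c, hcm', hum1']
    field_simp
    ring

theorem terminating3F2_two_balanced (n : ℕ) {a b c : ℝ} (hc : ∀ k : ℕ, c ≠ -k)
    (hs : ∀ z : ℤ, a + b - c ≠ z) :
    terminating3F2 (n + 1) a b c (a + b - c + 1 - n) =
      poch (c - a) n * poch (c - b) n * ((c + n) * (c - a - b - 1) + a * b) /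
        (poch c (n + 1) * poch (c - a - b - 1) (n + 1)) := by
  have hc1 : ∀ k : ℕ, c + 1 ≠ -k := fun k h => hc (k + 1) (by push_cast; linarith)
  have hs1 : ∀ z : ℤ, a + 1 + (b + 1) - (c + 1) ≠ z := fun z h =>
    hs (z - 1) (by push_cast; linarith)
  rw [terminating3F2_succ, terminating3F2_saalschutz n hc hs,
    show a + b - c + 1 - n + 1 = a + 1 + (b + 1) - (c + 1) + 1 - n by ring,
    terminating3F2_saalschutz n hc1 hs1,
    show c + 1 - (a + 1) - (b + 1) = c - a - b - 1 by ring,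
    show c + 1 - (a + 1) = c - a by ring, show c + 1 - (b + 1) = c - b by ring]
  have hcn : c + n ≠ 0 := fun h => hc n (by linarith)
  have hun : c - a - b - 1 + n ≠ 0 := fun h => hs (n - 1) (by push_cast; linarith)
  have hcn' : poch c n = c * poch (c + 1) n / (c + n) := eq_div_of_mul_eq hcn (poch_mul_add c n)
  have hun' :
      poch (c - a - b - 1) n = (c - a - b - 1) * poch (c - a - b) n / (c - a - b - 1 + n) :=
    eq_div_of_mul_eq hun (by rw [poch_mul_add, sub_add_cancel])
  have hu1 : c - a - b - 1 ≠ 0 := fun h => hs (-1) (by push_cast; linarith)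
  have he : a + b - c + 1 - n ≠ 0 := fun h => hs (n - 1) (by push_cast; linarith)
  rw [poch_succ' c, poch_succ' (c - a - b - 1), sub_add_cancel, hcn', hun']
  field_simp
  ring

theorem saalschutz_two_balanced_general (m : ℕ) (hm : 0 < m) (a b c : ℝ)
    (hc : ∀ z : ℤ, c ≠ (z : ℝ))
    (hac : ∀ z : ℤ, a - c ≠ (z : ℝ)) (hbc : ∀ z : ℤ, b - c ≠ (z : ℝ))
    (habc : ∀ z : ℤ, a + b - c ≠ (z : ℝ)) :
    ∑ k ∈ range (m + 1),
        poch (-(m : ℝ)) k * poch a k * poch b k /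
          (poch c k * poch (a + b - (m : ℝ) - c + 2) k * (k.factorial : ℝ)) =
      Real.Gamma (a + b - (m : ℝ) - c + 2) * Real.Gamma ((m : ℝ) - 1 - b + c) *
          Real.Gamma (1 - c + a) * Real.Gamma c /
          (Real.Gamma (2 - (m : ℝ) - c + a) * Real.Gamma (b - c + a + 2) *
            Real.Gamma ((m : ℝ) + c) * Real.Gamma (c - b)) *
        (-c ^ 2 + (-(m : ℝ) + b + a + 2) * c - (1 - (m : ℝ) + b) * a +
          ((m : ℝ) - 1) * (b + 1)) := by
  obtain ⟨n, rfl⟩ : ∃ n, m = n + 1 := ⟨m - 1, by omega⟩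
  have hc' : ∀ k : ℕ, c ≠ -k := fun k h => hc (-k) (by push_cast; linarith)
  have hcb : ∀ k : ℕ, c - b ≠ -k := fun k h => hbc k (by push_cast; linarith)
  have hca : ∀ k : ℕ, a - c + 1 - n ≠ -k := fun k h =>
    hac (n - 1 - k) (by push_cast; linarith)
  have hs : ∀ k : ℕ, a + b - c + 1 - n ≠ -k := fun k h =>
    habc (n - 1 - k) (by push_cast; linarith)
  have hlhs := terminating3F2_two_balanced n hc' habc
  simp only [terminating3F2, term3F2] at hlhs
  push_cast at hlhs ⊢
  rw [show a + b - (n + 1) - c + 2 = a + b - c + 1 - n by ring, hlhs,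
    show (n + 1 : ℝ) - 1 - b + c = c - b + n by ring, Gamma_add_nat hcb,
    show 1 - c + a = a - c + 1 - n + n by ring, Gamma_add_nat hca,
    show 2 - (n + 1 : ℝ) - c + a = a - c + 1 - n by ring,
    show b - c + a + 2 = a + b - c + 1 - n + (n + 1 : ℕ) by push_cast; ring, Gamma_add_nat hs,
    show (n + 1 : ℝ) + c = c + (n + 1 : ℕ) by push_cast; ring, Gamma_add_nat hc']
  have hca' : poch (a - c + 1 - n) n = (-1) ^ n * poch (c - a) n := by
    rw [← poch_one_sub_sub]; ring_nf
  have hs' :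
      poch (a + b - c + 1 - n) (n + 1) = (-1) ^ (n + 1) * poch (c - a - b - 1) (n + 1) := by
    rw [← poch_one_sub_sub]; push_cast; ring_nf
  rw [hca', hs']
  have hΓc := Real.Gamma_ne_zero hc'
  have hΓcb := Real.Gamma_ne_zero hcb
  have hΓca := Real.Gamma_ne_zero hca
  have hΓs := Real.Gamma_ne_zero hs
  field_simp
  ring

/-- The 2-balanced Saalschütz-type evaluation. -/
theorem saalschutz_two_balanced (m : ℕ) (hm : 0 < m) (a b c : ℝ)
    (ha : ∀ z : ℤ, a ≠ (z : ℝ)) (hb : ∀ z : ℤ, b ≠ (z : ℝ)) (hc : ∀ z : ℤ, c ≠ (z : ℝ))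
    (hac : ∀ z : ℤ, a - c ≠ (z : ℝ)) (hbc : ∀ z : ℤ, b - c ≠ (z : ℝ))
    (habc : ∀ z : ℤ, a + b - c ≠ (z : ℝ)) :
    ∑ k ∈ range (m + 1),
        poch (-(m : ℝ)) k * poch a k * poch b k /
          (poch c k * poch (a + b - (m : ℝ) - c + 2) k * (k.factorial : ℝ)) =
      Real.Gamma (a + b - (m : ℝ) - c + 2) * Real.Gamma ((m : ℝ) - 1 - b + c) *
          Real.Gamma (1 - c + a) * Real.Gamma c /
          (Real.Gamma (2 - (m : ℝ) - c + a) * Real.Gamma (b - c + a + 2) *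
            Real.Gamma ((m : ℝ) + c) * Real.Gamma (c - b)) *
        (-c ^ 2 + (-(m : ℝ) + b + a + 2) * c - (1 - (m : ℝ) + b) * a +
          ((m : ℝ) - 1) * (b + 1)) :=
  saalschutz_two_balanced_general m hm a b c hc hac hbc habc
end

section
/- Let m and n be positive integers with n ≥ m and let a be a real number with a > n − m. Then Σ_{k=0}^{n−1} (−1)^k · Γ(m+k)·Γ(a+k) / (Γ(k+m+a−n) · (k!)² · Γ(n−k)) = (−1)^{n+1}. Equivalently, the terminating series ₃F₂(1−n, a, m; 1, a−n+m; 1) equals (−1)^{n+1}·Γ(a−n+m)·Γ(n) / (Γ(m)·Γ(a)). -/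
/-!
Write `m = p + 1`, `n = p + q + 1` and `a = b + q` with `b > 0`. Then the `k`-th Gamma summand is
`(-1)^k (p+q choose k) P(k) / (p+q)!`, where `P(x) = (x+1)_p (x+b)_q` is a monic polynomial of
degree `p + q`, and the `k`-th hypergeometric summand is the same up to a factor independent of `k`.
The alternating binomial sum of `P(k)` is, up to sign, the `(p+q)`-th forward difference of `P`,
which for a monic polynomial of that degree is `(p+q)!`.
-/

open scoped BigOperators
open Finset

open Polynomial Nat

theorem Polynomial.Monic.sum_range_neg_one_pow_mul_choose_mul_eval {R : Type*} [CommRing R]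
    {P : R[X]} (hP : P.Monic) :
    ∑ k ∈ range (P.natDegree + 1), (-1 : R) ^ k * P.natDegree.choose k * P.eval (k : R) =
      (-1) ^ P.natDegree * P.natDegree ! := by
  have h := congr_fun P.fwdDiff_iter_degree_eq_factorial 0
  rw [fwdDiff_iter_eq_sum_shift, hP.leadingCoeff, one_smul, Pi.natCast_apply] at h
  rw [← h, mul_sum]
  refine sum_congr rfl fun k hk => ?_
  have hsign : (-1 : R) ^ k = (-1) ^ P.natDegree * (-1) ^ (P.natDegree - k) := by
    rw [← pow_add, show P.natDegree + (P.natDegree - k) = k + 2 * (P.natDegree - k) by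
      have := mem_range.1 hk; omega, pow_add, pow_mul]
    simp
  simp [hsign, zsmul_eq_mul, mul_assoc]

theorem sum_range_neg_one_pow_mul_choose_mul_poch_mul_poch (p q : ℕ) (b : ℝ) :
    ∑ k ∈ range (p + q + 1),
        (-1 : ℝ) ^ k * (p + q).choose k * (poch (k + 1) p * poch (b + k) q) =
      (-1) ^ (p + q) * (p + q)! := by
  have hP₁ := (monic_ascPochhammer ℝ p).comp_X_add_C 1
  have hP₂ := (monic_ascPochhammer ℝ q).comp_X_add_C b
  have h := (hP₁.mul hP₂).sum_range_neg_one_pow_mul_choose_mul_eval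
  rw [hP₁.natDegree_mul hP₂, natDegree_comp, natDegree_comp] at h
  simp only [ascPochhammer_natDegree, natDegree_X_add_C, mul_one] at h
  rw [← h]
  refine sum_congr rfl fun k _ => ?_
  simp [poch, add_comm]

theorem poch_mul_poch_add (x : ℝ) (j k : ℕ) : poch x j * poch (x + j) k = poch x (j + k) := by
  simpa [poch] using congr_arg (eval x) (ascPochhammer_mul (S := ℝ) j k)

theorem poch_pos {x : ℝ} (hx : 0 < x) (k : ℕ) : 0 < poch x k := ascPochhammer_pos k x hx

theorem poch_neg_natCast (N k : ℕ) : poch (-N) k = (-1) ^ k * N.descFactorial k := by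
  rw [poch, ascPochhammer_eval_neg_eq_descPochhammer, descPochhammer_eval_eq_descFactorial]

theorem poch_one (k : ℕ) : poch 1 k = k ! := ascPochhammer_eval_one ℝ k

theorem Real.Gamma_add_nat_eq_poch_mul {x : ℝ} (hx : ∀ j : ℕ, x ≠ -j) (k : ℕ) :
    Real.Gamma (x + k) = poch x k * Real.Gamma x := by
  induction k with
  | zero => simp [poch]
  | succ k ih =>
    have hxk : x + k ≠ 0 := fun h => hx k (by linarith)
    rw [Nat.cast_succ, ← add_assoc, Real.Gamma_add_one hxk, ih, ← poch_mul_poch_add, poch, poch,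
      ascPochhammer_one, eval_X]
    ring

theorem Real.Gamma_add_nat_eq_poch_mul_of_pos {x : ℝ} (hx : 0 < x) (k : ℕ) :
    Real.Gamma (x + k) = poch x k * Real.Gamma x :=
  Real.Gamma_add_nat_eq_poch_mul (fun j h => by linarith [(j.cast_nonneg : (0 : ℝ) ≤ j)]) k

theorem gamma_summand_eq_choose_mul_poch (p q : ℕ) {k : ℕ} (hk : k ≤ p + q) {b : ℝ}
    (hb : 0 < b) :
    (-1) ^ k * Real.Gamma (p + 1 + k) * Real.Gamma (b + q + k) /
        (Real.Gamma (b + k) * (k ! : ℝ) ^ 2 * Real.Gamma (p + q + 1 - k)) =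
      (-1) ^ k * (p + q).choose k * (poch (k + 1) p * poch (b + k) q) / (p + q)! := by
  have h₁ : Real.Gamma (p + 1 + k) = poch (k + 1) p * k ! := by
    rw [show (p + 1 + k : ℝ) = k + 1 + p by ring, Real.Gamma_add_nat_eq_poch_mul_of_pos
      (by positivity), Real.Gamma_nat_eq_factorial]
  have h₂ : Real.Gamma (b + q + k) = poch (b + k) q * Real.Gamma (b + k) := by
    rw [add_right_comm, Real.Gamma_add_nat_eq_poch_mul_of_pos (by positivity)]
  have h₃ : Real.Gamma (p + q + 1 - k) = (p + q - k)! := by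
    rw [← Real.Gamma_nat_eq_factorial, Nat.cast_sub hk]; push_cast; ring_nf
  have hchoose : ((p + q).choose k : ℝ) * k ! * (p + q - k)! = (p + q)! := by
    exact_mod_cast Nat.choose_mul_factorial_mul_factorial hk
  have hΓ := (Real.Gamma_pos_of_pos (by positivity : 0 < b + k)).ne'
  have hc : ((p + q).choose k : ℝ) ≠ 0 := by exact_mod_cast (Nat.choose_pos hk).ne'
  rw [h₁, h₂, h₃, ← hchoose]
  field_simp

theorem poch_summand_eq_choose_mul_poch (p q k : ℕ) {b : ℝ} (hb : 0 < b) :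
    poch (-(p + q : ℕ)) k * poch (b + q) k * poch (p + 1) k / (poch 1 k * poch b k * k !) =
      (-1) ^ k * (p + q).choose k * (poch (k + 1) p * poch (b + k) q) / (p ! * poch b q) := by
  have h₁ : poch (b + q) k * poch b q = poch b k * poch (b + k) q := by
    rw [mul_comm, poch_mul_poch_add, add_comm q, ← poch_mul_poch_add]
  have h₂ : poch (p + 1) k * poch 1 p = poch 1 k * poch (k + 1) p := by
    rw [mul_comm, add_comm (p : ℝ), add_comm (k : ℝ), poch_mul_poch_add, poch_mul_poch_add,
      add_comm]
  have hb₁ := (poch_pos hb k).ne'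
  have hb₂ := (poch_pos hb q).ne'
  simp only [poch_one] at h₂
  rw [poch_neg_natCast, Nat.descFactorial_eq_factorial_mul_choose, poch_one]
  field_simp
  push_cast
  linear_combination ((k ! : ℝ) * (p + q).choose k * (poch (p + 1) k * p !)) * h₁ +
    ((k ! : ℝ) * (p + q).choose k * (poch b k * poch (b + k) q)) * h₂

theorem sum_range_gamma_summand (p q : ℕ) {b : ℝ} (hb : 0 < b) :
    ∑ k ∈ range (p + q + 1), (-1) ^ k * Real.Gamma (p + 1 + k) * Real.Gamma (b + q + k) /
        (Real.Gamma (b + k) * (k ! : ℝ) ^ 2 * Real.Gamma (p + q + 1 - k)) = (-1) ^ (p + q) := by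
  rw [sum_congr rfl fun k hk =>
      gamma_summand_eq_choose_mul_poch p q (Nat.lt_succ_iff.1 (mem_range.1 hk)) hb, ← sum_div,
    sum_range_neg_one_pow_mul_choose_mul_poch_mul_poch]
  field_simp

theorem sum_range_poch_summand (p q : ℕ) {b : ℝ} (hb : 0 < b) :
    ∑ k ∈ range (p + q + 1),
        poch (-(p + q : ℕ)) k * poch (b + q) k * poch (p + 1) k / (poch 1 k * poch b k * k !) =
      (-1) ^ (p + q) * (p + q)! / (p ! * poch b q) := by
  rw [sum_congr rfl fun k _ => poch_summand_eq_choose_mul_poch p q k hb, ← sum_div,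
    sum_range_neg_one_pow_mul_choose_mul_poch_mul_poch]

theorem saalschutz_zero_balanced_general (m n : ℕ) (hm : 0 < m) (hmn : m ≤ n)
    (a : ℝ) (ha : a > (n : ℝ) - (m : ℝ)) :
    (∑ k ∈ range n,
        (-1 : ℝ) ^ k * Real.Gamma ((m : ℝ) + (k : ℝ)) * Real.Gamma (a + (k : ℝ)) /
          (Real.Gamma ((k : ℝ) + (m : ℝ) + a - (n : ℝ)) * ((k.factorial : ℝ)) ^ 2 *
            Real.Gamma ((n : ℝ) - (k : ℝ))) =
      (-1 : ℝ) ^ (n + 1)) ∧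
    (∑ k ∈ range n,
        poch (1 - (n : ℝ)) k * poch a k * poch (m : ℝ) k /
          (poch 1 k * poch (a - (n : ℝ) + (m : ℝ)) k * (k.factorial : ℝ)) =
      (-1 : ℝ) ^ (n + 1) * Real.Gamma (a - (n : ℝ) + (m : ℝ)) * Real.Gamma (n : ℝ) /
        (Real.Gamma (m : ℝ) * Real.Gamma a)) := by
  obtain ⟨p, rfl⟩ : ∃ p, m = p + 1 := ⟨m - 1, by omega⟩
  obtain ⟨q, rfl⟩ := Nat.exists_eq_add_of_le hmn
  obtain ⟨b, rfl⟩ : ∃ b, a = b + q := ⟨a - q, by ring⟩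
  have hb : 0 < b := by push_cast at ha; linarith
  have hb' : b + q - ((p + 1 + q : ℕ) : ℝ) + ((p + 1 : ℕ) : ℝ) = b := by push_cast; ring
  have hsign : (-1 : ℝ) ^ (p + 1 + q + 1) = (-1) ^ (p + q) := by ring
  rw [hb', hsign, show p + 1 + q = p + q + 1 by ring]
  constructor
  · refine (sum_congr rfl fun k _ => ?_).trans (sum_range_gamma_summand p q hb)
    push_cast
    ring_nf
  · refine (sum_congr rfl fun k _ => ?_).trans ((sum_range_poch_summand p q hb).trans ?_)
    · push_cast
      ring_nf
    · rw [Real.Gamma_add_nat_eq_poch_mul_of_pos hb, Nat.cast_succ, Nat.cast_succ,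
        Real.Gamma_nat_eq_factorial, Real.Gamma_nat_eq_factorial]
      have := (Real.Gamma_pos_of_pos hb).ne'
      field_simp

/-- A zero-balanced terminating variant of the Saalschütz theorem. -/
theorem saalschutz_zero_balanced (m n : ℕ) (hm : 0 < m) (hn : 0 < n) (hmn : m ≤ n)
    (a : ℝ) (ha : a > (n : ℝ) - (m : ℝ)) :
    (∑ k ∈ range n,
        (-1 : ℝ) ^ k * Real.Gamma ((m : ℝ) + (k : ℝ)) * Real.Gamma (a + (k : ℝ)) /
          (Real.Gamma ((k : ℝ) + (m : ℝ) + a - (n : ℝ)) * ((k.factorial : ℝ)) ^ 2 *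
            Real.Gamma ((n : ℝ) - (k : ℝ))) =
      (-1 : ℝ) ^ (n + 1)) ∧
    (∑ k ∈ range n,
        poch (1 - (n : ℝ)) k * poch a k * poch (m : ℝ) k /
          (poch 1 k * poch (a - (n : ℝ) + (m : ℝ)) k * (k.factorial : ℝ)) =
      (-1 : ℝ) ^ (n + 1) * Real.Gamma (a - (n : ℝ) + (m : ℝ)) * Real.Gamma (n : ℝ) /
        (Real.Gamma (m : ℝ) * Real.Gamma a)) :=
  saalschutz_zero_balanced_general m n hm hmn a ha
end
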